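/- The extended scalar product is an upper semicontinuous function from X = [0,1]^Ω × [-∞,∞)^Ω to [-∞,∞), where X carries the product topology (each factor with the order topology). -/

import Mathlib

open Filter Topology

variable {Ω : Type*}

/-- The extended scalar product `⟨f,g⟩ = Σ_ω f(ω)·g(ω)`, where `EReal`
multiplication satisfies the stipulation `a·0 = 0·a = 0` for all `a`. -/
noncomputable def eip [Fintype Ω] (f : Ω → ℝ) (g : Ω → EReal) : EReal :=
  ∑ ω, (f ω : EReal) * g ω

/-- Each summand `fg ↦ (fg.1 ω : EReal) * fg.2 ω` is upper semicontinuous on the set. -/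
lemma eip_term_usc [Fintype Ω] (ω : Ω) :
    UpperSemicontinuousOn
      (fun fg : (Ω → ℝ) × (Ω → EReal) => (fg.1 ω : EReal) * fg.2 ω)
      {fg | (∀ ω, fg.1 ω ∈ Set.Icc (0 : ℝ) 1) ∧ (∀ ω, fg.2 ω ≠ ⊤)} := by
  letI : DecidableEq Ω := Classical.decEq Ω
  set S : Set ((Ω → ℝ) × (Ω → EReal)) :=
    {fg | (∀ ω, fg.1 ω ∈ Set.Icc (0 : ℝ) 1) ∧ (∀ ω, fg.2 ω ≠ ⊤)} with hS
  intro fg hfg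
  have hc1 : ContinuousAt (fun p : (Ω → ℝ) × (Ω → EReal) => ((p.1 ω : EReal))) fg :=
    (continuous_coe_real_ereal.comp ((continuous_apply ω).comp continuous_fst)).continuousAt
  have hc2 : ContinuousAt (fun p : (Ω → ℝ) × (Ω → EReal) => p.2 ω) fg :=
    ((continuous_apply ω).comp continuous_snd).continuousAt
  by_cases h0 : (fg.1 ω : EReal) = 0 ∧ fg.2 ω = ⊥
  · -- indeterminate point `0 * ⊥ = 0`
    intro y hy
    have hy' : (0 : EReal) < y := by
      simpa [h0.1] using hy
    have hev : ∀ᶠ p in 𝓝[S] fg, p.2 ω < 0 := by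
      apply nhdsWithin_le_nhds
      exact hc2.eventually_lt continuousAt_const (by simp [h0.2])
    filter_upwards [hev, self_mem_nhdsWithin] with p hp hpS
    have h1 : (0 : EReal) ≤ (p.1 ω : EReal) := by
      exact_mod_cast (hpS.1 ω).1
    calc (p.1 ω : EReal) * p.2 ω ≤ 0 :=
          mul_nonpos_of_nonneg_of_nonpos h1 hp.le
      _ < y := hy'
  · -- multiplication is continuous at this point
    apply UpperSemicontinuousWithinAt.mono _ (le_refl _)
    have hmul : ContinuousAt (fun q : EReal × EReal => q.1 * q.2)
        ((fg.1 ω : EReal), fg.2 ω) := by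
      apply EReal.continuousAt_mul
      · by_cases hz : (fg.1 ω : EReal) = 0
        · right; intro hb; exact h0 ⟨hz, hb⟩
        · left; exact hz
      · right; exact hfg.2 ω
      · left; exact EReal.coe_ne_bot _
      · left; exact EReal.coe_ne_top _
    have hcm : ContinuousAt (fun p : (Ω → ℝ) × (Ω → EReal) => (p.1 ω : EReal) * p.2 ω) fg :=
      Filter.Tendsto.comp hmul (hc1.prodMk hc2)
    exact hcm.continuousWithinAt.upperSemicontinuousWithinAt

theorem stmt3 [Fintype Ω] [Nonempty Ω] :
    UpperSemicontinuousOn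
      (fun fg : (Ω → ℝ) × (Ω → EReal) => eip fg.1 fg.2)
      {fg | (∀ ω, fg.1 ω ∈ Set.Icc (0 : ℝ) 1) ∧ (∀ ω, fg.2 ω ≠ ⊤)} := by
  letI : DecidableEq Ω := Classical.decEq Ω
  set S : Set ((Ω → ℝ) × (Ω → EReal)) :=
    {fg | (∀ ω, fg.1 ω ∈ Set.Icc (0 : ℝ) 1) ∧ (∀ ω, fg.2 ω ≠ ⊤)} with hS
  -- prove by induction on the finset that partial sums are USC, with values ≠ ⊤
  have term_ne_top : ∀ (ω : Ω), ∀ fg ∈ S, ((fg.1 ω : EReal) * fg.2 ω) ≠ ⊤ := by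
    intro ω fg hfg
    have ha : (0 : EReal) ≤ (fg.1 ω : EReal) := by exact_mod_cast (hfg.1 ω).1
    have hb := hfg.2 ω
    set b := fg.2 ω with hbdef
    clear_value b
    induction b with
    | bot =>
        have : (fg.1 ω : EReal) * ⊥ ≤ 0 := mul_nonpos_of_nonneg_of_nonpos ha bot_le
        exact ne_top_of_le_ne_top (by simp) this
    | coe r => rw [← EReal.coe_mul]; exact EReal.coe_ne_top _
    | top => exact absurd rfl hb
  have main : ∀ t : Finset Ω,
      (∀ fg ∈ S, (∑ ω ∈ t, (fg.1 ω : EReal) * fg.2 ω) ≠ ⊤) ∧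
      UpperSemicontinuousOn
        (fun fg : (Ω → ℝ) × (Ω → EReal) => ∑ ω ∈ t, (fg.1 ω : EReal) * fg.2 ω) S := by
    intro t
    induction t using Finset.induction_on with
    | empty => simpa using upperSemicontinuousOn_const
    | insert a s hni ih =>
      simp only [Finset.sum_insert hni]
      constructor
      · intro fg hfg
        exact (EReal.add_lt_top (term_ne_top a fg hfg) (ih.1 fg hfg)).ne
      · intro fg hfg
        apply UpperSemicontinuousWithinAt.add' (eip_term_usc a fg hfg) (ih.2 fg hfg)
        apply EReal.continuousAt_add
        · exact Or.inl (term_ne_top a fg hfg)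
        · exact Or.inr (ih.1 fg hfg)
  intro fg hfg
  have := (main Finset.univ).2 fg hfg
  simpa [eip] using this
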